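/- arXiv:2101.03466 — 4 statements merged into one kernel-verified Lean document; each statement's English description precedes it below -/
import Mathlib

section
/- For v ∈ H₀(curl;Ω) with ∇·(εv) = 0 in Ω and ⟨εv·n_i,1⟩_{Γ_i} = 0 for i = 1,…,L, the Friedrichs-type inequality ‖v‖_{L²} ≲ ‖∇×v‖_{L²} holds, with constant independent of v. -/
/-!
Testing `(εv, v) = (ω, ∇×v)` against the bound on the vector potential gives
`(εv, v) ≤ Cω (εv, v)^{1/2} ‖∇×v‖`, i.e. `(εv, v)^{1/2} ≤ Cω ‖∇×v‖`; coercivity of `ε`,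
`c₀ ‖v‖² ≤ (εv, v)`, then yields `‖v‖ ≤ (Cω / √c₀) ‖∇×v‖`.
-/

open scoped RealInnerProductSpace

theorem Real.sqrt_le_mul_norm_of_le_inner {V : Type*} [NormedAddCommGroup V]
    [InnerProductSpace ℝ V] {E C : ℝ} {ω u : V} (hC : 0 ≤ C)
    (hE : E ≤ ⟪ω, u⟫) (hω : ‖ω‖ ≤ C * √E) : √E ≤ C * ‖u‖ := by
  rcases (Real.sqrt_nonneg E).eq_or_lt with h | h
  · rw [← h]; positivity
  · have hEpos : 0 < E := Real.sqrt_pos.mp h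
    have : √E * √E ≤ C * ‖u‖ * √E :=
      calc √E * √E = E := Real.mul_self_sqrt hEpos.le
        _ ≤ ‖ω‖ * ‖u‖ := hE.trans (real_inner_le_norm ω u)
        _ ≤ C * √E * ‖u‖ := by gcongr
        _ = C * ‖u‖ * √E := by ring
    exact le_of_mul_le_mul_right this h

theorem Real.le_sqrt_div_sqrt_of_mul_sq_le {c a E : ℝ} (hc : 0 < c) (ha : 0 ≤ a)
    (h : c * a ^ 2 ≤ E) : a ≤ √E / √c := by
  rw [le_div_iff₀ (Real.sqrt_pos.mpr hc), ← Real.sqrt_sq ha, ← Real.sqrt_mul' _ hc.le,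
    mul_comm]
  exact Real.sqrt_le_sqrt h

/-- `Hc` indexes the fields `v ∈ H₀(curl; Ω)` through their values `val` and curls `curl`;
`∇·(εv) = 0` together with the vanishing fluxes is encoded weakly as `(εv, ∇r) = 0` for all
`r ∈ H¹_{0c}(Ω)`, with `gradC r = ∇r`. -/
theorem stmt_5_general
    {V H0c Hc : Type*}
    [NormedAddCommGroup V] [InnerProductSpace ℝ V]
    (eps : V →ₗ[ℝ] V)
    (c₀ : ℝ) (hc₀ : 0 < c₀)
    (hLower : ∀ a : V, c₀ * ‖a‖ ^ 2 ≤ ⟪eps a, a⟫)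
    (gradC : H0c → V) (val curl : Hc → V)
    -- vector potential theorem: εv = ∇×ω with ∇·ω = 0, ‖ω‖₁ ≲ (εv,v)^{1/2}, giving
    -- (εv, v) = (∇×ω, v) = (ω, ∇×v) by integration by parts (v × n = 0 on Γ)
    (Cω : ℝ) (hCω : 0 < Cω)
    (hPot : ∀ w : Hc, (∀ r : H0c, ⟪eps (val w), gradC r⟫ = 0) →
      ∃ ω : V, ⟪eps (val w), val w⟫ = ⟪ω, curl w⟫ ∧
        ‖ω‖ ≤ Cω * Real.sqrt ⟪eps (val w), val w⟫) :
    ∃ C : ℝ, 0 < C ∧ ∀ w : Hc,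
      (∀ r : H0c, ⟪eps (val w), gradC r⟫ = 0) → ‖val w‖ ≤ C * ‖curl w‖ := by
  refine ⟨Cω / √c₀, by positivity, fun w hw => ?_⟩
  obtain ⟨ω, hEnergy, hω⟩ := hPot w hw
  have hSqrtEnergy : √⟪eps (val w), val w⟫ ≤ Cω * ‖curl w‖ :=
    Real.sqrt_le_mul_norm_of_le_inner hCω.le hEnergy.le hω
  calc ‖val w‖ ≤ √⟪eps (val w), val w⟫ / √c₀ :=
        Real.le_sqrt_div_sqrt_of_mul_sq_le hc₀ (norm_nonneg _) (hLower (val w))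
    _ ≤ Cω * ‖curl w‖ / √c₀ := by gcongr
    _ = Cω / √c₀ * ‖curl w‖ := by ring

/-- For `v ∈ H₀(curl;Ω)` with `∇·(εv) = 0` in `Ω` and
`⟨εv·n_i,1⟩_{Γ_i} = 0` for `i = 1,…,L`, the Friedrichs-type inequality
`‖v‖_{L²} ≲ ‖∇×v‖_{L²}` holds, with constant independent of `v`.

Abstraction: `Hc` indexes `H₀(curl;Ω)` fields (value `val`, curl `curl`);
the divergence-free and zero-flux conditions are expressed weakly as
`(εv, ∇r) = 0` for every `r ∈ H¹_{0c}(Ω)`.  The vector potential theorem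
(Girault–Raviart, Ch. I Thm 3.4) is distilled into `hPot`: for every admissible `v`
there is `ω` with `(εv, v) = (ω, ∇×v)` and `‖ω‖ ≤ Cω (εv,v)^{1/2}`.  Uniform positive
definiteness of `ε` is `hLower`/`hUpper`. -/
theorem stmt_5
    {V H0c Hc : Type*}
    [NormedAddCommGroup V] [InnerProductSpace ℝ V]
    (eps : V →ₗ[ℝ] V)
    (hSym : ∀ a b : V, ⟪eps a, b⟫ = ⟪a, eps b⟫)
    (c₀ c₁ : ℝ) (hc₀ : 0 < c₀) (hc₁ : 0 < c₁)
    (hLower : ∀ a : V, c₀ * ‖a‖ ^ 2 ≤ ⟪eps a, a⟫)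
    (hUpper : ∀ a : V, ⟪eps a, a⟫ ≤ c₁ * ‖a‖ ^ 2)
    (gradC : H0c → V) (val curl : Hc → V)
    -- vector potential theorem: εv = ∇×ω with ∇·ω = 0, ‖ω‖₁ ≲ (εv,v)^{1/2}, giving
    -- (εv, v) = (∇×ω, v) = (ω, ∇×v) by integration by parts (v × n = 0 on Γ)
    (Cω : ℝ) (hCω : 0 < Cω)
    (hPot : ∀ w : Hc, (∀ r : H0c, ⟪eps (val w), gradC r⟫ = 0) →
      ∃ ω : V, ⟪eps (val w), val w⟫ = ⟪ω, curl w⟫ ∧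
        ‖ω‖ ≤ Cω * Real.sqrt ⟪eps (val w), val w⟫) :
    ∃ C : ℝ, 0 < C ∧ ∀ w : Hc,
      (∀ r : H0c, ⟪eps (val w), gradC r⟫ = 0) → ‖val w‖ ≤ C * ‖curl w‖ :=
  stmt_5_general eps c₀ hc₀ hLower gradC val curl Cω hCω hPot
end

section
/- Commutativity of weak gradient with projection: for w ∈ H¹(T), the discrete weak gradient of the projected weak function Q_h w = {Q₀w, Q_b w} equals the L² projection of the classical gradient: ∇_w(Q_h w) = 𝒬_h(∇w), where Q₀, Q_b, 𝒬_h are L² projections onto P_k(T), P_k(∂T faces), and [P_k(T)]³ respectively. -/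
/-! Both `∇_w(Q_h w)` and `𝒬_h(∇w)` lie in `[P_k(T)]³`, so it suffices that they have the same
inner product with every `φ ∈ [P_k(T)]³`. Since `∇·φ ∈ P_k(T)` and `φ·n ∈ P_k(∂T)`, the projections
`Q₀`, `Q_b` drop out of the defining relation of `∇_w`, and the divergence theorem turns what is
left into `(∇w, φ)`, which equals `(𝒬_h ∇w, φ)`. -/

open scoped RealInnerProductSpace

theorem inner_eq_of_inner_sub_eq_zero {E : Type*} [NormedAddCommGroup E] [InnerProductSpace ℝ E]
    {a b p : E} (h : ⟪a - b, p⟫ = 0) : ⟪b, p⟫ = ⟪a, p⟫ :=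
  (sub_eq_zero.mp ((inner_sub_left (𝕜 := ℝ) a b p).symm.trans h)).symm

theorem Submodule.eq_of_forall_inner_eq {E : Type*} [NormedAddCommGroup E]
    [InnerProductSpace ℝ E] {K : Submodule ℝ E} {x y : E} (hx : x ∈ K) (hy : y ∈ K)
    (h : ∀ φ ∈ K, ⟪x, φ⟫ = ⟪y, φ⟫) : x = y := by
  have hxy : ⟪x - y, x - y⟫ = 0 := by
    rw [inner_sub_left, h _ (K.sub_mem hx hy), sub_self]
  exact sub_eq_zero.mp (inner_self_eq_zero.mp hxy)

theorem stmt_10_general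
    {A Bd Vv : Type*}
    [NormedAddCommGroup A] [InnerProductSpace ℝ A]
    [NormedAddCommGroup Bd] [InnerProductSpace ℝ Bd]
    [NormedAddCommGroup Vv] [InnerProductSpace ℝ Vv]
    (Pk : Submodule ℝ A) (Pkb : Submodule ℝ Bd) (PkV : Submodule ℝ Vv)
    -- L² projections
    (Q0 : A →ₗ[ℝ] A)
    (hQ0orth : ∀ a : A, ∀ p ∈ Pk, ⟪a - Q0 a, p⟫ = 0)
    (Qb : Bd →ₗ[ℝ] Bd)
    (hQborth : ∀ b : Bd, ∀ p ∈ Pkb, ⟪b - Qb b, p⟫ = 0)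
    (QV : Vv →ₗ[ℝ] Vv) (hQVmem : ∀ v, QV v ∈ PkV)
    (hQVorth : ∀ v : Vv, ∀ p ∈ PkV, ⟪v - QV v, p⟫ = 0)
    -- divergence and normal trace of polynomial test fields
    (divM : Vv →ₗ[ℝ] A) (nTr : Vv →ₗ[ℝ] Bd)
    (hdivMem : ∀ φ ∈ PkV, divM φ ∈ Pk)
    (hnTrMem : ∀ φ ∈ PkV, nTr φ ∈ Pkb)
    -- w ∈ H¹(T): value w0, gradient gw, boundary trace wtr, divergence theorem
    (w0 : A) (gw : Vv) (wtr : Bd)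
    (hDivThm : ∀ φ ∈ PkV, ⟪w0, divM φ⟫ = -⟪gw, φ⟫ + ⟪wtr, nTr φ⟫)
    -- G is the discrete weak gradient of Q_h w = {Q₀ w0, Q_b wtr}
    (G : Vv) (hGmem : G ∈ PkV)
    (hG : ∀ φ ∈ PkV, ⟪G, φ⟫ = -⟪Q0 w0, divM φ⟫ + ⟪Qb wtr, nTr φ⟫) :
    G = QV gw := by
  refine Submodule.eq_of_forall_inner_eq hGmem (hQVmem gw) fun φ hφ => ?_
  calc ⟪G, φ⟫ = -⟪Q0 w0, divM φ⟫ + ⟪Qb wtr, nTr φ⟫ := hG φ hφ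
    _ = -⟪w0, divM φ⟫ + ⟪wtr, nTr φ⟫ := by
      rw [inner_eq_of_inner_sub_eq_zero (hQ0orth w0 _ (hdivMem φ hφ)),
        inner_eq_of_inner_sub_eq_zero (hQborth wtr _ (hnTrMem φ hφ))]
    _ = ⟪gw, φ⟫ := by rw [hDivThm φ hφ]; ring
    _ = ⟪QV gw, φ⟫ := (inner_eq_of_inner_sub_eq_zero (hQVorth gw φ hφ)).symm

/-- Commutativity of the weak gradient with projection: for
`w ∈ H¹(T)`, the discrete weak gradient of the projected weak function
`Q_h w = {Q₀w, Q_b w}` equals the L² projection of the classical gradient: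
`∇_w(Q_h w) = 𝒬_h(∇w)`, where `Q₀, Q_b, 𝒬_h` are the L² projections onto `P_k(T)`,
the face polynomials `P_k(∂T)`, and `[P_k(T)]³` respectively.

Abstraction: `A = L²(T)`, `Bd = L²(∂T)`, `Vv = [L²(T)]³` with polynomial subspaces
`Pk`, `Pkb`, `PkV`; the projections are characterized by range and orthogonality;
`w ∈ H¹(T)` is given by its L² realization `w0`, gradient `gw` and trace `wtr`,
tied together by the divergence theorem against test polynomials.  Any `G ∈ [P_k(T)]³`
satisfying the defining relation of `∇_w(Q_h w)` equals `𝒬_h(∇w) = QV gw`. -/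
theorem stmt_10
    {A Bd Vv : Type*}
    [NormedAddCommGroup A] [InnerProductSpace ℝ A]
    [NormedAddCommGroup Bd] [InnerProductSpace ℝ Bd]
    [NormedAddCommGroup Vv] [InnerProductSpace ℝ Vv]
    (Pk : Submodule ℝ A) (Pkb : Submodule ℝ Bd) (PkV : Submodule ℝ Vv)
    -- L² projections
    (Q0 : A →ₗ[ℝ] A) (hQ0mem : ∀ a, Q0 a ∈ Pk)
    (hQ0orth : ∀ a : A, ∀ p ∈ Pk, ⟪a - Q0 a, p⟫ = 0)
    (Qb : Bd →ₗ[ℝ] Bd) (hQbmem : ∀ b, Qb b ∈ Pkb)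
    (hQborth : ∀ b : Bd, ∀ p ∈ Pkb, ⟪b - Qb b, p⟫ = 0)
    (QV : Vv →ₗ[ℝ] Vv) (hQVmem : ∀ v, QV v ∈ PkV)
    (hQVorth : ∀ v : Vv, ∀ p ∈ PkV, ⟪v - QV v, p⟫ = 0)
    -- divergence and normal trace of polynomial test fields
    (divM : Vv →ₗ[ℝ] A) (nTr : Vv →ₗ[ℝ] Bd)
    (hdivMem : ∀ φ ∈ PkV, divM φ ∈ Pk)
    (hnTrMem : ∀ φ ∈ PkV, nTr φ ∈ Pkb)
    -- w ∈ H¹(T): value w0, gradient gw, boundary trace wtr, divergence theorem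
    (w0 : A) (gw : Vv) (wtr : Bd)
    (hDivThm : ∀ φ ∈ PkV, ⟪w0, divM φ⟫ = -⟪gw, φ⟫ + ⟪wtr, nTr φ⟫)
    -- G is the discrete weak gradient of Q_h w = {Q₀ w0, Q_b wtr}
    (G : Vv) (hGmem : G ∈ PkV)
    (hG : ∀ φ ∈ PkV, ⟪G, φ⟫ = -⟪Q0 w0, divM φ⟫ + ⟪Qb wtr, nTr φ⟫) :
    G = QV gw :=
  stmt_10_general Pk Pkb PkV Q0 hQ0orth Qb hQborth QV hQVmem hQVorth divM nTr hdivMem hnTrMem w0 gw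
    wtr hDivThm G hGmem hG
end

section
/- Error equation for the stabilizer norms: with e_λ = Q_hλ - λ_h, e_q = ℚ_h q - q_h, e_s = Q_h s - s_h (where the exact dual variables satisfy λ = 0, q = 0, s = 0), the PDWG error functions satisfy s₁(e_λ, e_q; e_λ, e_q) + s₂(e_s, e_s) = ⟨u - 𝒬_h u, εn(e_{λ,0} - e_{λ,b}) + (e_{q,b} - e_{q,0})×n⟩_{∂𝒯_h}, and consequently ⫼(e_λ, e_q)⫼ + ⫼e_s⫼ ≲ h^{k+θ}‖u‖_{k+θ} provided u ∈ [H^{k+θ}(Ω)]³ with θ ∈ (1/2, 1]. -/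
open scoped RealInnerProductSpace

/-!
Testing the first error equation with `(e_λ, e_q)` and the second with `(e_u, e_s)` and
subtracting cancels the bilinear form `B`, which gives the energy identity. The trace estimate
then bounds the energy `E = ⫼(e_λ, e_q)⫼² + ⫼e_s⫼²` by `C₀ h^{k+θ} ‖u‖_{k+θ} √E`, so
`√E ≤ C₀ h^{k+θ} ‖u‖_{k+θ}`, and each of the two norms is at most `√E`.
-/

namespace Real

theorem sqrt_le_of_le_mul_sqrt {S A : ℝ} (hS : 0 ≤ S) (hA : 0 ≤ A) (h : S ≤ A * √S) :
    √S ≤ A := by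
  nlinarith [sq_sqrt hS, sqrt_nonneg S]

theorem sqrt_add_sqrt_le_of_add_le_mul_sqrt {a b A : ℝ} (ha : 0 ≤ a) (hb : 0 ≤ b) (hA : 0 ≤ A)
    (h : a + b ≤ A * √a) : √a + √b ≤ 2 * A := by
  have hsum : √(a + b) ≤ A :=
    sqrt_le_of_le_mul_sqrt (add_nonneg ha hb) hA
      (h.trans (mul_le_mul_of_nonneg_left (sqrt_le_sqrt (by linarith)) hA))
  have hsa : √a ≤ √(a + b) := sqrt_le_sqrt (by linarith)
  have hsb : √b ≤ √(a + b) := sqrt_le_sqrt (by linarith)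
  linarith

end Real

theorem stmt_15_general
    {V Sh Mh Wh : Type*}
    [NormedAddCommGroup V] [InnerProductSpace ℝ V]
    (s1 : Mh × Wh → Mh × Wh → ℝ) (s2 : Sh → Sh → ℝ)
    (B : V × Sh → Mh × Wh → ℝ) (ℓ : Mh × Wh → ℝ)
    (elam : Mh) (eq : Wh) (es : Sh) (eu : V)
    (hs1 : ∀ x, 0 ≤ s1 x x) (hs2 : ∀ r, 0 ≤ s2 r r)
    -- first error equation
    (hErr1 : ∀ x : Mh × Wh, s1 (elam, eq) x + B (eu, es) x = ℓ x)
    -- second error equation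
    (hErr2 : ∀ (v : V) (r : Sh), -s2 es r + B (v, r) (elam, eq) = 0)
    (k : ℕ) (θ h Unorm : ℝ)
    (hh : 0 < h) (hU : 0 ≤ Unorm)
    -- trace/approximation estimate for the boundary pairing of u - 𝒬_h u
    (C0 : ℝ) (hC0 : 0 < C0)
    (hTrace : ∀ x : Mh × Wh,
      |ℓ x| ≤ C0 * h ^ ((k : ℝ) + θ) * Unorm * Real.sqrt (s1 x x)) :
    s1 (elam, eq) (elam, eq) + s2 es es = ℓ (elam, eq) ∧
      ∃ C : ℝ, 0 < C ∧
        Real.sqrt (s1 (elam, eq) (elam, eq)) + Real.sqrt (s2 es es)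
          ≤ C * h ^ ((k : ℝ) + θ) * Unorm := by
  have henergy : s1 (elam, eq) (elam, eq) + s2 es es = ℓ (elam, eq) := by
    linarith [hErr1 (elam, eq), hErr2 eu es]
  refine ⟨henergy, 2 * C0, by positivity, ?_⟩
  have hbound : s1 (elam, eq) (elam, eq) + s2 es es
      ≤ C0 * h ^ ((k : ℝ) + θ) * Unorm * √(s1 (elam, eq) (elam, eq)) :=
    henergy ▸ (le_abs_self _).trans (hTrace _)
  calc √(s1 (elam, eq) (elam, eq)) + √(s2 es es)
      ≤ 2 * (C0 * h ^ ((k : ℝ) + θ) * Unorm) :=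
        Real.sqrt_add_sqrt_le_of_add_le_mul_sqrt (hs1 _) (hs2 _) (by positivity) hbound
    _ = 2 * C0 * h ^ ((k : ℝ) + θ) * Unorm := by ring

/-- Error equation for the stabilizer norms: with
`e_λ = Q_hλ - λ_h`, `e_q = ℚ_h q - q_h`, `e_s = Q_h s - s_h` (the exact dual
variables satisfying `λ = 0, q = 0, s = 0`), the PDWG error functions satisfy
`s₁(e_λ, e_q; e_λ, e_q) + s₂(e_s, e_s)
   = ⟨u - 𝒬_h u, εn(e_{λ,0} - e_{λ,b}) + (e_{q,b} - e_{q,0})×n⟩_{∂𝒯_h}`,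
and consequently `⫼(e_λ, e_q)⫼ + ⫼e_s⫼ ≲ h^{k+θ}‖u‖_{k+θ}` provided
`u ∈ [H^{k+θ}(Ω)]³` with `θ ∈ (1/2, 1]`.

Abstraction: `s1, s2` are the stabilizers, `B : (V × Sh) → (Mh × Wh) → ℝ` the PDWG
bilinear form, and `ℓ x = ⟨u - 𝒬_h u, εn(φ₀-φ_b)+(ψ_b-ψ₀)×n⟩_{∂𝒯_h}` the boundary
pairing of the consistency error at the test pair `x = (φ, ψ)`; `hErr1, hErr2` are
the two error equations, and `hTrace` the standard trace/approximation estimate, with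
`Unorm = ‖u‖_{k+θ}`. -/
theorem stmt_15
    {V Sh Mh Wh : Type*}
    [NormedAddCommGroup V] [InnerProductSpace ℝ V]
    (s1 : Mh × Wh → Mh × Wh → ℝ) (s2 : Sh → Sh → ℝ)
    (B : V × Sh → Mh × Wh → ℝ) (ℓ : Mh × Wh → ℝ)
    (elam : Mh) (eq : Wh) (es : Sh) (eu : V)
    (hs1 : ∀ x, 0 ≤ s1 x x) (hs2 : ∀ r, 0 ≤ s2 r r)
    -- first error equation
    (hErr1 : ∀ x : Mh × Wh, s1 (elam, eq) x + B (eu, es) x = ℓ x)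
    -- second error equation
    (hErr2 : ∀ (v : V) (r : Sh), -s2 es r + B (v, r) (elam, eq) = 0)
    (k : ℕ) (θ h Unorm : ℝ)
    (hθ : 1 / 2 < θ ∧ θ ≤ 1) (hh : 0 < h) (hU : 0 ≤ Unorm)
    -- trace/approximation estimate for the boundary pairing of u - 𝒬_h u
    (C0 : ℝ) (hC0 : 0 < C0)
    (hTrace : ∀ x : Mh × Wh,
      |ℓ x| ≤ C0 * h ^ ((k : ℝ) + θ) * Unorm * Real.sqrt (s1 x x)) :
    s1 (elam, eq) (elam, eq) + s2 es es = ℓ (elam, eq) ∧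
      ∃ C : ℝ, 0 < C ∧
        Real.sqrt (s1 (elam, eq) (elam, eq)) + Real.sqrt (s2 es es)
          ≤ C * h ^ ((k : ℝ) + θ) * Unorm :=
  stmt_15_general s1 s2 B ℓ elam eq es eu hs1 hs2 hErr1 hErr2 k θ h Unorm hh hU C0 hC0 hTrace
end

section
/- In the Helmholtz-based uniqueness step: if u_h ∈ [L²(Ω)]³ satisfies (u_h, ε∇φ̃ + ∇×ψ̃) + (ψ̃, ε∇s₀) = 0 where u_h = ε⁻¹∇×ψ̃ + ∇φ̃ + η̃ is its own Helmholtz decomposition with η̃ ∈ 𝓗_{εn,0}(Ω), ∇·(εψ̃) = 0, and s₀ ∈ H¹(Ω), then (ε(u_h - η̃), u_h - η̃) = -(ψ̃, ε∇s₀); in particular if additionally (ψ̃, ε∇s₀) = 0 then u_h = η̃ is ε-harmonic. -/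
open scoped RealInnerProductSpace

/-! Since `ε(u_h - η̃) = ∇×ψ̃ + ε∇φ̃` and `η̃` is orthogonal to both terms, the hypothesis
equation reads `(ε(u_h - η̃), u_h - η̃) + (ψ̃, ε∇s₀) = 0`; positivity of `ε` then forces
`u_h = η̃` once `(ψ̃, ε∇s₀) = 0`. -/

section

variable {V : Type*} [NormedAddCommGroup V] [InnerProductSpace ℝ V]

theorem eq_zero_of_inner_apply_self_eq_zero {T : V → V} (hT : ∀ a : V, a ≠ 0 → 0 < ⟪T a, a⟫)
    {a : V} (h : ⟪T a, a⟫ = 0) : a = 0 := by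
  by_contra ha
  exact (hT a ha).ne' h

theorem inner_sub_eq_inner_of_inner_eq_zero {u η w : V} (h : ⟪η, w⟫ = 0) :
    ⟪w, u - η⟫ = ⟪u, w⟫ := by
  rw [inner_sub_right, real_inner_comm η, h, sub_zero, real_inner_comm]

theorem apply_sub_eq_of_eq_add {T S : V →ₗ[ℝ] V} (hTS : ∀ a : V, T (S a) = a) {u η c g : V}
    (hu : u = S c + g + η) : T (u - η) = c + T g := by
  rw [hu, add_sub_cancel_right, map_add, hTS]

end

theorem stmt_18_general
    {V H1 Hc : Type*}
    [NormedAddCommGroup V] [InnerProductSpace ℝ V]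
    (eps epsInv : V →ₗ[ℝ] V)
    (hPos : ∀ a : V, a ≠ 0 → 0 < ⟪eps a, a⟫)
    (hInv : ∀ a : V, eps (epsInv a) = a)
    (grad : H1 → V) (val curl : Hc → V)
    (uh η : V) (ψt : Hc) (φt : H1) (s0 : H1)
    -- η̃ ∈ 𝓗_{εn,0}(Ω)
    (hη1 : ∀ φ : H1, ⟪η, eps (grad φ)⟫ = 0)
    (hη2 : ∀ ψ : Hc, ⟪η, curl ψ⟫ = 0)
    -- the Helmholtz decomposition of u_h
    (hDec : uh = epsInv (curl ψt) + grad φt + η)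
    -- the hypothesis equation
    (hEq : ⟪uh, eps (grad φt) + curl ψt⟫ + ⟪val ψt, eps (grad s0)⟫ = 0) :
    ⟪eps (uh - η), uh - η⟫ = -⟪val ψt, eps (grad s0)⟫ ∧
      (⟪val ψt, eps (grad s0)⟫ = 0 → uh = η) := by
  have hflux : eps (uh - η) = curl ψt + eps (grad φt) := apply_sub_eq_of_eq_add hInv hDec
  have horth : ⟪η, eps (uh - η)⟫ = 0 := by
    rw [hflux, inner_add_right, hη2, hη1, add_zero]
  have henergy : ⟪eps (uh - η), uh - η⟫ = -⟪val ψt, eps (grad s0)⟫ := by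
    rw [inner_sub_eq_inner_of_inner_eq_zero horth, hflux, add_comm]
    linarith
  refine ⟨henergy, fun hs0 => sub_eq_zero.mp ?_⟩
  exact eq_zero_of_inner_apply_self_eq_zero hPos (by rw [henergy, hs0, neg_zero])

/-- In the Helmholtz-based uniqueness step: if `u_h ∈ [L²(Ω)]³`
satisfies `(u_h, ε∇φ̃ + ∇×ψ̃) + (ψ̃, ε∇s₀) = 0` where
`u_h = ε⁻¹∇×ψ̃ + ∇φ̃ + η̃` is its own Helmholtz decomposition with
`η̃ ∈ 𝓗_{εn,0}(Ω)`, `∇·(εψ̃) = 0`, and `s₀ ∈ H¹(Ω)`, then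
`(ε(u_h - η̃), u_h - η̃) = -(ψ̃, ε∇s₀)`; in particular if additionally
`(ψ̃, ε∇s₀) = 0` then `u_h = η̃` is ε-harmonic.

Abstraction: `H1` indexes `H¹(Ω)` (gradient `grad`), `H0c` indexes `H¹_{0c}(Ω)`
(gradient `gradC`), `Hc` indexes `H₀(curl;Ω)` (value `val`, curl `curl`);
`η̃ ∈ 𝓗_{εn,0}(Ω)` is expressed by the weak characterization `(η̃, ε∇φ) = 0` and
`(η̃, ∇×ψ) = 0` (ε-orthogonality to gradients and to ε⁻¹-curls); the gauge
`∇·(εψ̃) = 0` with vanishing fluxes is expressed weakly via `H¹_{0c}`. -/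
theorem stmt_18
    {V H1 H0c Hc : Type*}
    [NormedAddCommGroup V] [InnerProductSpace ℝ V]
    (eps epsInv : V →ₗ[ℝ] V)
    (hSym : ∀ a b : V, ⟪eps a, b⟫ = ⟪a, eps b⟫)
    (hPos : ∀ a : V, a ≠ 0 → 0 < ⟪eps a, a⟫)
    (hInv : ∀ a : V, eps (epsInv a) = a)
    (grad : H1 → V) (gradC : H0c → V) (val curl : Hc → V)
    (uh η : V) (ψt : Hc) (φt : H1) (s0 : H1)
    -- η̃ ∈ 𝓗_{εn,0}(Ω)
    (hη1 : ∀ φ : H1, ⟪η, eps (grad φ)⟫ = 0)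
    (hη2 : ∀ ψ : Hc, ⟪η, curl ψ⟫ = 0)
    -- gauge: ∇·(εψ̃) = 0 with vanishing fluxes
    (hGauge : ∀ r : H0c, ⟪eps (val ψt), gradC r⟫ = 0)
    -- the Helmholtz decomposition of u_h
    (hDec : uh = epsInv (curl ψt) + grad φt + η)
    -- the hypothesis equation
    (hEq : ⟪uh, eps (grad φt) + curl ψt⟫ + ⟪val ψt, eps (grad s0)⟫ = 0) :
    ⟪eps (uh - η), uh - η⟫ = -⟪val ψt, eps (grad s0)⟫ ∧
      (⟪val ψt, eps (grad s0)⟫ = 0 → uh = η) :=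
  stmt_18_general eps epsInv hPos hInv grad val curl uh η ψt φt s0 hη1 hη2 hDec hEq
end
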